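/- arXiv:1206.0720 — 3 statements merged into one kernel-verified Lean document; each statement's English description precedes it below -/
import Mathlib

section
/- If $x_n : [a,T] \to \mathbb{R}$ converges uniformly to $x : [a,T] \to \mathbb{R}$, then $\Psi(x_n)$ converges uniformly to $\Psi(x)$ and $\Phi(x_n)$ converges uniformly to $\Phi(x)$, where $\Psi(z)(t) = \sup_{a \leq s \leq t} \max(-z(s),0)$ and $\Phi(z) = z + \Psi(z)$. -/
open Filter

lemma sSup_image_le_add (ε : ℝ) (f g : ℝ → ℝ) (s : Set ℝ) (hne : s.Nonempty)
    (hbg : BddAbove (g '' s)) (hfg : ∀ y ∈ s, f y ≤ g y + ε) :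
    sSup (f '' s) ≤ sSup (g '' s) + ε := by
  apply csSup_le (hne.image f)
  rintro z ⟨y, hy, rfl⟩
  calc f y ≤ g y + ε := hfg y hy
    _ ≤ sSup (g '' s) + ε := by
        gcongr
        exact le_csSup hbg (Set.mem_image_of_mem g hy)

/-- Continuity of the Skorokhod reflection map in the uniform topology: if `xₙ → x` uniformly
on `[a, T]`, then `Ψ(xₙ) → Ψ(x)` and `Φ(xₙ) → Φ(x)` uniformly on `[a, T]`. -/
theorem stmt6 (a T : ℝ) (haT : a < T) (x : ℕ → ℝ → ℝ) (xlim : ℝ → ℝ)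
    (hb : ∀ n, BddAbove ((fun s => max (-(x n s)) 0) '' Set.Icc a T))
    (hblim : BddAbove ((fun s => max (-(xlim s)) 0) '' Set.Icc a T))
    (h : TendstoUniformlyOn x xlim atTop (Set.Icc a T)) :
    TendstoUniformlyOn (fun n t => sSup ((fun s => max (-(x n s)) 0) '' Set.Icc a t))
        (fun t => sSup ((fun s => max (-(xlim s)) 0) '' Set.Icc a t)) atTop (Set.Icc a T) ∧
      TendstoUniformlyOn
        (fun n t => x n t + sSup ((fun s => max (-(x n s)) 0) '' Set.Icc a t))
        (fun t => xlim t + sSup ((fun s => max (-(xlim s)) 0) '' Set.Icc a t))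
        atTop (Set.Icc a T) := by
  have key : TendstoUniformlyOn (fun n t => sSup ((fun s => max (-(x n s)) 0) '' Set.Icc a t))
      (fun t => sSup ((fun s => max (-(xlim s)) 0) '' Set.Icc a t)) atTop (Set.Icc a T) := by
    rw [Metric.tendstoUniformlyOn_iff] at h ⊢
    intro ε hε
    filter_upwards [h (ε / 2) (by positivity)] with n hn t ht
    have htT : Set.Icc a t ⊆ Set.Icc a T := Set.Icc_subset_Icc le_rfl ht.2
    have hne : (Set.Icc a t).Nonempty := Set.nonempty_Icc.2 ht.1
    have hb1 : BddAbove ((fun s => max (-(x n s)) 0) '' Set.Icc a t) :=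
      (hb n).mono (Set.image_mono htT)
    have hb2 : BddAbove ((fun s => max (-(xlim s)) 0) '' Set.Icc a t) :=
      hblim.mono (Set.image_mono htT)
    have hpt : ∀ y ∈ Set.Icc a t, |max (-(x n y)) 0 - max (-(xlim y)) 0| ≤ ε / 2 := by
      intro y hy
      have := hn y (htT hy)
      rw [Real.dist_eq] at this
      calc |max (-(x n y)) 0 - max (-(xlim y)) 0| ≤ |(-(x n y)) - (-(xlim y))| :=
            abs_max_sub_max_le_abs _ _ _
        _ = |xlim y - x n y| := by rw [neg_sub_neg, abs_sub_comm]
        _ ≤ ε / 2 := this.le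
    have h1 : sSup ((fun s => max (-(x n s)) 0) '' Set.Icc a t)
        ≤ sSup ((fun s => max (-(xlim s)) 0) '' Set.Icc a t) + ε / 2 :=
      sSup_image_le_add _ _ _ _ hne hb2 fun y hy => by
        have := hpt y hy; rw [abs_sub_le_iff] at this; linarith [this.1]
    have h2 : sSup ((fun s => max (-(xlim s)) 0) '' Set.Icc a t)
        ≤ sSup ((fun s => max (-(x n s)) 0) '' Set.Icc a t) + ε / 2 :=
      sSup_image_le_add _ _ _ _ hne hb1 fun y hy => by
        have := hpt y hy; rw [abs_sub_le_iff] at this; linarith [this.2]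
    rw [Real.dist_eq, abs_sub_lt_iff]
    constructor <;> linarith
  exact ⟨key, h.add key⟩
end

section
/- Let $x$ be as above and $y$ continuous with $y(-T_0) = 0$, and define $\hat{Q}(t) = y(t) + \max_{s \in \nabla_t^x}(-y(s))$. Then $\hat{Q}(t) = y(t)$ for $t \in [-T_0,\tau)$, $\hat{Q}(\tau) = y(\tau) + \max(0,-y(\tau)) = \max(y(\tau), 0)$, and $\hat{Q}(t) = 0$ for $t \in (\tau,\infty)$. In particular: (i) $\hat{Q}$ is continuous on $[-T_0,\tau)\cup(\tau,\infty)$; (ii) if $y(\tau) > 0$ then $\hat{Q}(\tau-) = \hat{Q}(\tau) = y(\tau) > 0 = \hat{Q}(\tau+)$ (right-discontinuity); (iii) if $y(\tau) < 0$ then $\hat{Q}(\tau-) = y(\tau) < 0 = \hat{Q}(\tau) = \hat{Q}(\tau+)$ (left-discontinuity). -/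
open Filter

/-- Form of the diffusion limit of the queue length for uniform arrivals:
`Q̂(t) = y(t)` before `τ`, `Q̂(τ) = max(y(τ), 0)`, `Q̂ = 0` after `τ`; `Q̂` is continuous off `τ`,
with a right-discontinuity at `τ` if `y(τ) > 0` and a left-discontinuity if `y(τ) < 0`. -/
theorem stmt16 (T₀ τ : ℝ) (hT₀ : 0 < T₀) (hτ : 0 < τ) (x y : ℝ → ℝ)
    (hcont : ContinuousOn x (Set.Ici (-T₀))) (h0 : x (-T₀) = 0)
    (hinc : StrictMonoOn x (Set.Icc (-T₀) 0))
    (hdec1 : StrictAntiOn x (Set.Icc 0 τ)) (hxτ : x τ = 0)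
    (hdec2 : StrictAntiOn x (Set.Ici τ))
    (hycont : ContinuousOn y (Set.Ici (-T₀))) (hy0 : y (-T₀) = 0)
    (Q : ℝ → ℝ)
    (hQ : ∀ t, Q t = y t + sSup ((fun s => -y s) ''
      {s ∈ Set.Icc (-T₀) t | x s = sInf (x '' Set.Icc (-T₀) t)})) :
    (∀ t ∈ Set.Ico (-T₀) τ, Q t = y t) ∧
    Q τ = max (y τ) 0 ∧
    (∀ t, τ < t → Q t = 0) ∧
    (ContinuousOn Q (Set.Ico (-T₀) τ) ∧ ContinuousOn Q (Set.Ioi τ)) ∧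
    (0 < y τ → Tendsto Q (nhdsWithin τ (Set.Iio τ)) (nhds (y τ)) ∧ Q τ = y τ ∧
      Tendsto Q (nhdsWithin τ (Set.Ioi τ)) (nhds 0)) ∧
    (y τ < 0 → Tendsto Q (nhdsWithin τ (Set.Iio τ)) (nhds (y τ)) ∧ Q τ = 0 ∧
      Tendsto Q (nhdsWithin τ (Set.Ioi τ)) (nhds 0)) := by
  have hTτ : -T₀ < τ := by linarith
  have hxpos : ∀ s, -T₀ < s → s < τ → 0 < x s := by
    intro s hs1 hs2
    rcases le_or_gt s 0 with hs | hs
    · have h := hinc ⟨le_refl _, by linarith⟩ ⟨hs1.le, hs⟩ hs1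
      rw [h0] at h; exact h
    · have h := hdec1 ⟨hs.le, hs2.le⟩ ⟨hτ.le, le_refl _⟩ hs2
      rw [hxτ] at h; exact h
  have hxnonneg : ∀ s ∈ Set.Icc (-T₀) τ, 0 ≤ x s := by
    intro s hs
    rcases eq_or_lt_of_le hs.1 with h | h
    · rw [← h, h0]
    rcases eq_or_lt_of_le hs.2 with h2 | h2
    · rw [h2, hxτ]
    · exact (hxpos s h h2).le
  have hinf1 : ∀ t, -T₀ ≤ t → t ≤ τ → sInf (x '' Set.Icc (-T₀) t) = 0 := by
    intro t ht1 ht2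
    apply le_antisymm
    · refine csInf_le ⟨0, ?_⟩ ⟨-T₀, ⟨le_refl _, ht1⟩, h0⟩
      rintro v ⟨s, hs, rfl⟩
      exact hxnonneg s ⟨hs.1, hs.2.trans ht2⟩
    · refine le_csInf ⟨x (-T₀), ⟨-T₀, ⟨le_refl _, ht1⟩, rfl⟩⟩ ?_
      rintro v ⟨s, hs, rfl⟩
      exact hxnonneg s ⟨hs.1, hs.2.trans ht2⟩
  have hargmin1 : ∀ t, -T₀ ≤ t → t < τ →
      {s ∈ Set.Icc (-T₀) t | x s = sInf (x '' Set.Icc (-T₀) t)} = {-T₀} := by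
    intro t ht1 ht2
    rw [hinf1 t ht1 ht2.le]
    ext s
    simp only [Set.mem_setOf_eq, Set.mem_singleton_iff, Set.mem_Icc]
    constructor
    · rintro ⟨⟨hs1, hs2⟩, hx⟩
      by_contra h
      exact (hxpos s (lt_of_le_of_ne hs1 (Ne.symm h)) (lt_of_le_of_lt hs2 ht2)).ne' hx
    · rintro rfl; exact ⟨⟨le_refl _, ht1⟩, h0⟩
  have hQeq : ∀ t ∈ Set.Ico (-T₀) τ, Q t = y t := by
    intro t ht
    rw [hQ, hargmin1 t ht.1 ht.2, Set.image_singleton, csSup_singleton, hy0]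
    ring
  have hargminτ : {s ∈ Set.Icc (-T₀) τ | x s = sInf (x '' Set.Icc (-T₀) τ)}
      = {-T₀, τ} := by
    rw [hinf1 τ hTτ.le le_rfl]
    ext s
    simp only [Set.mem_setOf_eq, Set.mem_insert_iff, Set.mem_singleton_iff, Set.mem_Icc]
    constructor
    · rintro ⟨⟨hs1, hs2⟩, hx⟩
      rcases eq_or_lt_of_le hs1 with h | h
      · exact Or.inl h.symm
      rcases eq_or_lt_of_le hs2 with h2 | h2
      · exact Or.inr h2
      · exact absurd hx (hxpos s h h2).ne'
    · rintro (rfl | rfl)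
      · exact ⟨⟨le_rfl, hTτ.le⟩, h0⟩
      · exact ⟨⟨hTτ.le, le_rfl⟩, hxτ⟩
  have hQτ : Q τ = max (y τ) 0 := by
    rw [hQ, hargminτ, Set.image_pair, csSup_pair, hy0, neg_zero]
    rcases le_total (y τ) 0 with h | h
    · rw [max_eq_right (by linarith : (0:ℝ) ≤ -y τ), max_eq_right h]; ring
    · rw [max_eq_left (by linarith : -y τ ≤ 0), max_eq_left h]; ring
  have hxlt : ∀ t, τ < t → ∀ s, -T₀ ≤ s → s < t → x t < x s := by
    intro t ht s hs1 hs2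
    rcases le_or_gt s τ with h | h
    · have h1 : 0 ≤ x s := hxnonneg s ⟨hs1, h⟩
      have h2 : x t < x τ := hdec2 Set.self_mem_Ici ht.le ht
      rw [hxτ] at h2; linarith
    · exact hdec2 h.le (h.trans hs2).le hs2
  have hinf2 : ∀ t, τ < t → sInf (x '' Set.Icc (-T₀) t) = x t := by
    intro t ht
    have hmem : x t ∈ x '' Set.Icc (-T₀) t := ⟨t, ⟨by linarith, le_rfl⟩, rfl⟩
    have hlb : ∀ v ∈ x '' Set.Icc (-T₀) t, x t ≤ v := by
      rintro v ⟨s, hs, rfl⟩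
      rcases eq_or_lt_of_le hs.2 with h | h
      · rw [h]
      · exact (hxlt t ht s hs.1 h).le
    exact le_antisymm (csInf_le ⟨x t, hlb⟩ hmem) (le_csInf ⟨x t, hmem⟩ hlb)
  have hargmin2 : ∀ t, τ < t →
      {s ∈ Set.Icc (-T₀) t | x s = sInf (x '' Set.Icc (-T₀) t)} = {t} := by
    intro t ht
    rw [hinf2 t ht]
    ext s
    simp only [Set.mem_setOf_eq, Set.mem_singleton_iff, Set.mem_Icc]
    constructor
    · rintro ⟨⟨hs1, hs2⟩, hx⟩
      by_contra h
      exact (hxlt t ht s hs1 (lt_of_le_of_ne hs2 h)).ne' hx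
    · rintro rfl; exact ⟨⟨by linarith, le_rfl⟩, rfl⟩
  have hQ0 : ∀ t, τ < t → Q t = 0 := by
    intro t ht
    rw [hQ, hargmin2 t ht, Set.image_singleton, csSup_singleton]; ring
  have hleft : Tendsto Q (nhdsWithin τ (Set.Iio τ)) (nhds (y τ)) := by
    have hy : Tendsto y (nhdsWithin τ (Set.Iio τ)) (nhds (y τ)) :=
      ((hycont.continuousAt (Ici_mem_nhds hTτ)).tendsto).mono_left nhdsWithin_le_nhds
    refine Tendsto.congr' ?_ hy
    filter_upwards [Ioo_mem_nhdsLT_of_mem (Set.mem_Ioc.mpr ⟨hTτ, le_rfl⟩)] with s hs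
    exact (hQeq s ⟨hs.1.le, hs.2⟩).symm
  have hright : Tendsto Q (nhdsWithin τ (Set.Ioi τ)) (nhds 0) := by
    refine Tendsto.congr' ?_ tendsto_const_nhds
    filter_upwards [self_mem_nhdsWithin] with s hs
    exact (hQ0 s hs).symm
  refine ⟨hQeq, hQτ, hQ0, ⟨?_, ?_⟩, ?_, ?_⟩
  · exact ((hycont.mono Set.Ico_subset_Ici_self).congr hQeq)
  · exact continuousOn_const.congr fun t ht => hQ0 t ht
  · intro h
    exact ⟨hleft, by rw [hQτ, max_eq_left h.le], hright⟩
  · intro h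
    exact ⟨hleft, by rw [hQτ, max_eq_right h.le], hright⟩
end

section
/- Let $F$ be uniform on $[-T_0,T]$ with $\mu(T+T_0) > 1$, let $\tau \in (0,T)$ be the unique solution of $F(\tau) = \mu\tau$, and define $\bar{X}(t) = F(t) - \mu t\mathbf{1}_{\{t\geq0\}}$ and $\bar{B}(t) = t\mathbf{1}_{\{t\geq0\}} - \frac{1}{\mu}\sup_{-T_0\leq s\leq t}(-\bar{X}(s))_+$. Then $\bar{B}(t) = t$ for $t \in [0,\tau]$ and $\bar{B}(t) = F(t)/\mu$ for $t \in (\tau,\infty)$ (in particular $\bar{B}(t) = 1/\mu$ for $t \geq T$). -/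
/-- Fluid busy time for uniform arrivals: `B̄(t) = t` on `[0, τ]` and `B̄(t) = F(t)/μ` for
`t > τ`; in particular `B̄(t) = 1/μ` for `t ≥ T`. -/
theorem stmt18 (T₀ T μ τ : ℝ) (hT₀ : 0 < T₀) (hT : 0 < T) (hμ : 0 < μ)
    (hstab : 1 < μ * (T + T₀))
    (F X B : ℝ → ℝ)
    (hF : ∀ t, F t = if t < -T₀ then 0 else if t ≤ T then (t + T₀) / (T + T₀) else 1)
    (hτmem : τ ∈ Set.Ioo (0:ℝ) T) (hτeq : F τ = μ * τ)
    (hX : ∀ t, X t = F t - (if 0 ≤ t then μ * t else 0))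
    (hB : ∀ t, B t = (if 0 ≤ t then t else 0)
      - (1 / μ) * sSup ((fun s => max (-X s) 0) '' Set.Icc (-T₀) t)) :
    (∀ t ∈ Set.Icc (0:ℝ) τ, B t = t) ∧
    (∀ t, τ < t → B t = F t / μ) ∧
    (∀ t, T ≤ t → B t = 1 / μ) := by
  have hc : (0:ℝ) < T + T₀ := by linarith
  have hτ0 : 0 < τ := hτmem.1
  have hτT : τ < T := hτmem.2
  have hFτ : F τ = (τ + T₀) / (T + T₀) := by
    rw [hF, if_neg (by linarith), if_pos hτT.le]
  have hτeq' : μ * τ * (T + T₀) = τ + T₀ := by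
    have h := hτeq
    rw [hFτ] at h
    field_simp at h
    linarith
  -- F is nonnegative
  have hFnn : ∀ s, 0 ≤ F s := by
    intro s
    rw [hF]
    split_ifs with h1 h2
    · exact le_refl 0
    · exact div_nonneg (by linarith [not_lt.mp h1]) hc.le
    · norm_num
  -- Lipschitz-type bound for F
  have hFlip : ∀ a b : ℝ, a ≤ b → F b - F a ≤ (b - a) / (T + T₀) := by
    intro a b hab
    rw [hF a, hF b]
    have hba : (0:ℝ) ≤ (b - a) / (T + T₀) := div_nonneg (by linarith) hc.le
    split_ifs <;>
      first
        | linarith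
        | (rw [sub_zero, div_le_div_iff₀ hc hc]; nlinarith)
        | (rw [div_sub_div_same, div_le_div_iff₀ hc hc]; nlinarith)
        | (rw [sub_zero, le_div_iff₀ hc]; nlinarith)
        | (rw [sub_le_iff_le_add, ← add_div, le_div_iff₀ hc]; nlinarith)
  -- X nonneg on [-T₀, τ]
  have hXpos : ∀ s, -T₀ ≤ s → s ≤ τ → 0 ≤ X s := by
    intro s h1 h2
    rw [hX, hF, if_neg (not_lt.2 (by linarith)), if_pos (by linarith : s ≤ T)]
    split_ifs with h0
    · have h3 : μ * s * (T + T₀) ≤ s + T₀ := by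
        nlinarith [mul_nonneg (by linarith : (0:ℝ) ≤ τ - s)
          (by linarith : (0:ℝ) ≤ μ * (T + T₀) - 1)]
      rw [sub_nonneg, le_div_iff₀ hc]
      linarith
    · simp only [sub_zero]
      exact div_nonneg (by linarith) hc.le
  -- Part 1
  have part1 : ∀ t ∈ Set.Icc (0:ℝ) τ, B t = t := by
    rintro t ⟨h0, h1⟩
    have himg : (fun s => max (-X s) 0) '' Set.Icc (-T₀) t = {0} := by
      rw [Set.eq_singleton_iff_unique_mem]
      constructor
      · exact ⟨t, ⟨by linarith, le_refl t⟩, by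
          simp only
          rw [max_eq_right (by linarith [hXpos t (by linarith) h1])]⟩
      · rintro x ⟨s, ⟨hs1, hs2⟩, rfl⟩
        simp only
        rw [max_eq_right (by linarith [hXpos s hs1 (by linarith)])]
    rw [hB, himg, if_pos h0, csSup_singleton]
    ring
  -- sSup value for t > τ
  have hsup : ∀ t, τ < t → sSup ((fun s => max (-X s) 0) '' Set.Icc (-T₀) t) = μ * t - F t := by
    intro t ht
    have h0t : 0 < t := lt_trans hτ0 ht
    have hdiv : ∀ a b : ℝ, a ≤ b → F b - F a ≤ μ * (b - a) := by
      intro a b hab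
      have h1 := hFlip a b hab
      have h2 : (b - a) / (T + T₀) ≤ μ * (b - a) := by
        rw [div_le_iff₀ hc]
        nlinarith
      linarith
    have hge : 0 ≤ μ * t - F t := by
      have := hdiv τ t ht.le
      linarith [hτeq]
    have hub : ∀ x ∈ (fun s => max (-X s) 0) '' Set.Icc (-T₀) t, x ≤ μ * t - F t := by
      rintro x ⟨s, ⟨hs1, hs2⟩, rfl⟩
      simp only
      apply max_le _ hge
      rw [hX]
      split_ifs with h0
      · have := hdiv s t hs2
        linarith
      · linarith [hFnn s]
    have hmem : μ * t - F t ∈ (fun s => max (-X s) 0) '' Set.Icc (-T₀) t := by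
      refine ⟨t, ⟨by linarith, le_refl t⟩, ?_⟩
      simp only
      rw [hX, if_pos h0t.le, max_eq_left (by linarith)]
      ring
    exact le_antisymm (csSup_le ⟨_, hmem⟩ hub)
      (le_csSup ⟨μ * t - F t, hub⟩ hmem)
  have part2 : ∀ t, τ < t → B t = F t / μ := by
    intro t ht
    have h0t : 0 < t := lt_trans hτ0 ht
    rw [hB, hsup t ht, if_pos h0t.le]
    field_simp
    ring
  refine ⟨part1, part2, ?_⟩
  intro t hTt
  rw [part2 t (lt_of_lt_of_le hτT hTt)]
  congr 1
  rw [hF]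
  split_ifs with h1 h2
  · linarith
  · have : t = T := le_antisymm h2 hTt
    rw [this]
    field_simp
  · rfl
end
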